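/- For every integer i ≥ 1 and every finite alphabet A with |A| ≥ 2, the maximum cardinality of a code C ⊆ (A⁴)ⁱ that is unambiguous for the Scenario-A.2 i-shot Mirrored Diamond channel, taken over all choices of per-round node functions (f₁ʲ, f₂ʲ : A² → A for j = 1,…,i), equals |A|ⁱ. Equivalently, the i-shot capacity of the Mirrored Diamond Network when the adversary may change the attacked edge each round is 1, the same as its one-shot capacity. -/

import Mathlib

/-!
Upper bound: if two codewords `x ≠ y` gave the same lower-relay output
`f₂ʲ(x₂ʲ, x₃ʲ) = f₂ʲ(y₂ʲ, y₃ʲ)` in every round, then the adversary could make the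
upper relay see `(y₀ʲ, x₁ʲ)` from either codeword (corrupting edge 0 of `x` or edge 1 of `y`),
so the fan-out sets would meet. Hence the lower relay's outputs separate the code, and
`|C| ≤ |A|ⁱ`.

Achievability: send `(aʲ, aʲ, aʲ, aʲ)` in round `j`, and let each relay forward its input when
its two incoming symbols agree and an erasure symbol `e` otherwise. Each relay output is then
`aʲ` or `e`, and the relay whose edges were not attacked outputs `aʲ`, so `aʲ` can be read off
the output pair.
-/

/-- A code `C` is unambiguous for the channel `Ω` if distinct codewords have
disjoint fan-out sets. -/
def Unambiguous {X Y : Type*} (Ω : X → Set Y) (C : Finset X) : Prop :=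
  ∀ x ∈ C, ∀ y ∈ C, x ≠ y → Ω x ∩ Ω y = ∅

/-- The `i`-shot Mirrored Diamond Network channel in Scenario A.2: in each
round the adversary may corrupt at most one of the four source edges, possibly
a different edge in different rounds.  Per-round node functions are
`f₁ʲ, f₂ʲ : A² → A`. -/
def mirroredDiamondA2Channel {A : Type*} [DecidableEq A] (i : ℕ)
    (f₁ : Fin i → A → A → A) (f₂ : Fin i → A → A → A)
    (x : Fin i → Fin 4 → A) : Set (Fin i → A × A) :=
  { z | ∃ y : Fin i → Fin 4 → A,
      (∀ j : Fin i, hammingDist (y j) (x j) ≤ 1) ∧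
      (∀ j : Fin i, z j = (f₁ j (y j 0) (y j 1), f₂ j (y j 2) (y j 3))) }

open Finset Function

section Hamming

variable {ι β : Type*} [Fintype ι] [DecidableEq β]

theorem hammingDist_update_le_one [DecidableEq ι] (v : ι → β) (k : ι) (b : β) :
    hammingDist (update v k b) v ≤ 1 :=
  calc hammingDist (update v k b) v ≤ #{k} := card_le_card fun l hl => by
        by_contra hlk
        simp_all [update_of_ne]
    _ = 1 := card_singleton k

theorem eq_or_eq_of_hammingDist_le_one {v w : ι → β} (h : hammingDist v w ≤ 1) {k l : ι}
    (hkl : k ≠ l) : v k = w k ∨ v l = w l := by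
  classical
  by_contra! hne
  have hsub : ({k, l} : Finset ι) ⊆ ({m | v m ≠ w m} : Finset ι) := by
    simp [insert_subset_iff, hne]
  have := (card_le_card hsub).trans h
  rw [card_pair hkl] at this
  omega

end Hamming

theorem Unambiguous.of_leftInverse {X Y : Type*} {Ω : X → Set Y} {C : Finset X} (g : Y → X)
    (hg : ∀ x ∈ C, ∀ z ∈ Ω x, g z = x) : Unambiguous Ω C := by
  intro x hx y hy hxy
  refine Set.eq_empty_iff_forall_notMem.mpr fun z ⟨hzx, hzy⟩ => hxy ?_
  rw [← hg x hx z hzx, hg y hy z hzy]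

def repetitionCode (A : Type*) [Fintype A] [DecidableEq A] (i : ℕ) :
    Finset (Fin i → Fin 4 → A) :=
  univ.image fun (a : Fin i → A) j _ => a j

section MirroredDiamond

variable {A : Type*} [DecidableEq A] {i : ℕ}

theorem Unambiguous.injOn_lowerRelay {f₁ f₂ : Fin i → A → A → A}
    {C : Finset (Fin i → Fin 4 → A)} (hC : Unambiguous (mirroredDiamondA2Channel i f₁ f₂) C) :
    Set.InjOn (fun (x : Fin i → Fin 4 → A) j => f₂ j (x j 2) (x j 3)) C := by
  intro x hx y hy hxy
  by_contra hne
  have hz : (fun j => (f₁ j (y j 0) (x j 1), f₂ j (x j 2) (x j 3))) ∈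
      mirroredDiamondA2Channel i f₁ f₂ x ∩ mirroredDiamondA2Channel i f₁ f₂ y := by
    refine ⟨⟨fun j => update (x j) 0 (y j 0), fun j => hammingDist_update_le_one _ _ _,
      fun j => by simp⟩, ⟨fun j => update (y j) 1 (x j 1),
      fun j => hammingDist_update_le_one _ _ _, fun j => ?_⟩⟩
    have hj : f₂ j (x j 2) (x j 3) = f₂ j (y j 2) (y j 3) := congrFun hxy j
    simp [hj]
  rw [hC x hx y hy hne] at hz
  exact hz

def agreeOr (e u v : A) : A := if u = v then u else e

def decodePair (e : A) (z : A × A) : A := if z.1 = e then z.2 else z.1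

theorem agreeOr_self (e a : A) : agreeOr e a a = a := if_pos rfl

theorem agreeOr_eq_or_eq {e a u v : A} (h : u = a ∨ v = a) :
    agreeOr e u v = a ∨ agreeOr e u v = e := by
  unfold agreeOr
  split_ifs with huv
  · rcases h with rfl | rfl <;> simp [huv]
  · exact Or.inr rfl

theorem decodePair_eq {e a p q : A} (hp : p = a ∨ p = e) (hq : q = a ∨ q = e)
    (h : p = a ∨ q = a) : decodePair e (p, q) = a := by
  unfold decodePair
  split_ifs with hpe <;> grind

theorem decodePair_agreeOr {e a : A} {y : Fin 4 → A} (hy : hammingDist y (fun _ => a) ≤ 1) :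
    decodePair e (agreeOr e (y 0) (y 1), agreeOr e (y 2) (y 3)) = a := by
  have pair (k l : Fin 4) (hkl : k ≠ l) : y k = a ∨ y l = a :=
    eq_or_eq_of_hammingDist_le_one hy hkl
  refine decodePair_eq (agreeOr_eq_or_eq (pair 0 1 (by decide)))
    (agreeOr_eq_or_eq (pair 2 3 (by decide))) ?_
  have h02 := pair 0 2 (by decide)
  have h03 := pair 0 3 (by decide)
  have h12 := pair 1 2 (by decide)
  have h13 := pair 1 3 (by decide)
  have hclean : (y 0 = a ∧ y 1 = a) ∨ (y 2 = a ∧ y 3 = a) := by tauto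
  rcases hclean with ⟨h0, h1⟩ | ⟨h2, h3⟩
  · left; rw [h0, h1, agreeOr_self]
  · right; rw [h2, h3, agreeOr_self]

variable [Fintype A]

theorem card_repetitionCode : #(repetitionCode A i) = Fintype.card A ^ i := by
  rw [repetitionCode, card_image_of_injective _ fun a b hab => funext fun j => congrFun₂ hab j 0]
  simp

theorem unambiguous_repetitionCode (e : A) :
    Unambiguous (mirroredDiamondA2Channel i (fun _ => agreeOr e) (fun _ => agreeOr e))
      (repetitionCode A i) := by
  refine Unambiguous.of_leftInverse (fun z j _ => decodePair e (z j)) ?_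
  rintro _ hx z ⟨y, hy, hz⟩
  obtain ⟨a, -, rfl⟩ := mem_image.mp hx
  funext j _
  rw [hz j]
  exact decodePair_agreeOr (hy j)

end MirroredDiamond

theorem mirrored_diamond_A2_multishot_capacity_general
    (A : Type*) [Fintype A] [DecidableEq A] (hA : 2 ≤ Fintype.card A)
    (i : ℕ) :
    IsGreatest { n : ℕ |
        ∃ (f₁ : Fin i → A → A → A) (f₂ : Fin i → A → A → A)
          (C : Finset (Fin i → Fin 4 → A)),
          Unambiguous (mirroredDiamondA2Channel i f₁ f₂) C ∧ C.card = n }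
      (Fintype.card A ^ i) := by
  obtain ⟨e⟩ : Nonempty A := Fintype.card_pos_iff.mp (by omega)
  refine ⟨⟨fun _ => agreeOr e, fun _ => agreeOr e, repetitionCode A i,
    unambiguous_repetitionCode e, card_repetitionCode⟩, ?_⟩
  rintro n ⟨f₁, f₂, C, hC, rfl⟩
  calc #C ≤ #(univ : Finset (Fin i → A)) :=
        card_le_card_of_injOn _ (fun _ _ => mem_coe.mpr (mem_univ _)) hC.injOn_lowerRelay
    _ = Fintype.card A ^ i := by simp

/-- Scenario A.2 multishot capacity of the Mirrored Diamond Network: the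
maximum cardinality of an unambiguous code, over all choices of per-round node
functions, is `|A|^i`. -/
theorem mirrored_diamond_A2_multishot_capacity
    (A : Type*) [Fintype A] [DecidableEq A] (hA : 2 ≤ Fintype.card A)
    (i : ℕ) (hi : 1 ≤ i) :
    IsGreatest { n : ℕ |
        ∃ (f₁ : Fin i → A → A → A) (f₂ : Fin i → A → A → A)
          (C : Finset (Fin i → Fin 4 → A)),
          Unambiguous (mirroredDiamondA2Channel i f₁ f₂) C ∧ C.card = n }
      (Fintype.card A ^ i) :=
  mirrored_diamond_A2_multishot_capacity_general A hA i
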